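/- arXiv:1501.06852 — 7 statements merged into one kernel-verified Lean document; each statement's English description precedes it below -/
import Mathlib

section
/- For all real δ with 0 < δ < 1 and all real μ ≥ 0, the rational function λ(μ) = (μ² + 2δμ + δ)/(μ + √δ)² satisfies λ(μ) ≥ (1 − √δ)/2. -/
theorem stmt_1 (δ μ : ℝ) (hδ0 : 0 < δ) (hδ1 : δ < 1) (hμ : 0 ≤ μ) :
    (1 - Real.sqrt δ) / 2 ≤ (μ ^ 2 + 2 * δ * μ + δ) / (μ + Real.sqrt δ) ^ 2 := by
  set s := Real.sqrt δ with hs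
  have hs0 : 0 < s := Real.sqrt_pos.mpr hδ0
  have hs1 : s < 1 := by
    rw [hs, show (1:ℝ) = Real.sqrt 1 by simp]
    exact Real.sqrt_lt_sqrt hδ0.le hδ1
  have hsq : s ^ 2 = δ := by rw [hs, sq, Real.mul_self_sqrt hδ0.le]
  have hpos : 0 < (μ + s) ^ 2 := by positivity
  rw [div_le_div_iff₀ (by norm_num) hpos]
  nlinarith [sq_nonneg (μ - s), sq_nonneg (μ + s), mul_nonneg hμ (sub_nonneg.mpr hs1.le), sq_nonneg μ, mul_nonneg (mul_nonneg hμ hμ) hs0.le]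
end

section
/- For r < 0, the function g(k) = (1+r)k² − 2k⁴ + k⁶ on k ≥ 0 attains its minimum value −1/τ* at k² = 2/3 + (1/3)√α, where α = 1 − 3r and τ* = 27 / (2(√α − 1)(√α + 2)²); consequently 1 + τ·g(k) = 0 has a solution k ≥ 0 if and only if τ ≥ τ*. -/
/-!
With `s = √(1 - 3r)`, i.e. `r = (1 - s²)/3`, the polynomial `27 g(k) + 2(s - 1)(s + 2)²` factors as
`(3k² - 2 - s)² (3k² + 2s - 2)`. For `s ≥ 1` both factors are nonnegative, so `g ≥ -1/τ*` with
equality exactly where `3k² = 2 + s`. Since `g 0 = 0`, the intermediate value theorem on `[0, k₀]`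
shows that `g` takes every value `-1/τ` with `τ ≥ τ*`, and the lower bound excludes all others.
-/

open Set

def pfcRate (r k : ℝ) : ℝ := (1 + r) * k ^ 2 - 2 * k ^ 4 + k ^ 6

section Factorization

variable {r s : ℝ}

theorem pfcRate_factor (hs : s ^ 2 = 1 - 3 * r) (k : ℝ) :
    27 * pfcRate r k + 2 * (s - 1) * (s + 2) ^ 2 = (3 * k ^ 2 - 2 - s) ^ 2 * (3 * k ^ 2 + 2 * s - 2) := by
  unfold pfcRate
  linear_combination (9 * k ^ 2) * hs

theorem neg_le_pfcRate (hs : s ^ 2 = 1 - 3 * r) (hs1 : 1 ≤ s) (k : ℝ) :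
    -(2 * (s - 1) * (s + 2) ^ 2 / 27) ≤ pfcRate r k := by
  have : 0 ≤ (3 * k ^ 2 - 2 - s) ^ 2 * (3 * k ^ 2 + 2 * s - 2) :=
    mul_nonneg (sq_nonneg _) (by nlinarith [sq_nonneg k])
  linarith [pfcRate_factor hs k]

theorem pfcRate_eq_of_sq_eq (hs : s ^ 2 = 1 - 3 * r) {k : ℝ} (hk : k ^ 2 = 2 / 3 + s / 3) :
    pfcRate r k = -(2 * (s - 1) * (s + 2) ^ 2 / 27) := by
  have h := pfcRate_factor hs k
  rw [hk] at h
  linarith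

end Factorization

theorem exists_one_add_mul_eq_zero_iff {g : ℝ → ℝ} (hg : Continuous g) (hg0 : g 0 = 0)
    {τs k₀ : ℝ} (hτs : 0 < τs) (hk₀ : 0 ≤ k₀) (hmin : g k₀ = -(1 / τs))
    (hlb : ∀ k, 0 ≤ k → -(1 / τs) ≤ g k) {τ : ℝ} (hτ : 0 < τ) :
    (∃ k, 0 ≤ k ∧ 1 + τ * g k = 0) ↔ τs ≤ τ := by
  have hsol : ∀ k, 1 + τ * g k = 0 ↔ g k = -(1 / τ) := fun k => by
    constructor <;> intro h <;> field_simp at h ⊢ <;> linarith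
  simp only [hsol]
  constructor
  · rintro ⟨k, hk, hgk⟩
    have := hlb k hk
    rw [hgk, neg_le_neg_iff] at this
    exact (one_div_le_one_div hτ hτs).mp this
  · intro hle
    have hval : -(1 / τ) ∈ Icc (g k₀) (g 0) := by
      rw [hmin, hg0]
      exact ⟨neg_le_neg (one_div_le_one_div_of_le hτs hle), by simp [hτ.le]⟩
    obtain ⟨k, hk, hgk⟩ := intermediate_value_Icc' hk₀ hg.continuousOn hval
    exact ⟨k, hk.1, hgk⟩

theorem stmt_5 (r : ℝ) (hr : r < 0) :
    let g : ℝ → ℝ := fun k => (1 + r) * k ^ 2 - 2 * k ^ 4 + k ^ 6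
    let α : ℝ := 1 - 3 * r
    let τs : ℝ := 27 / (2 * (Real.sqrt α - 1) * (Real.sqrt α + 2) ^ 2)
    let k0 : ℝ := Real.sqrt (2 / 3 + Real.sqrt α / 3)
    (∀ k : ℝ, 0 ≤ k → -(1 / τs) ≤ g k) ∧
    k0 ^ 2 = 2 / 3 + Real.sqrt α / 3 ∧ g k0 = -(1 / τs) ∧
    (∀ τ : ℝ, 0 < τ → ((∃ k : ℝ, 0 ≤ k ∧ 1 + τ * g k = 0) ↔ τs ≤ τ)) := by
  intro g α τs k0
  set s := Real.sqrt α
  have hs : s ^ 2 = 1 - 3 * r := Real.sq_sqrt (by linarith)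
  have hs1 : 1 < s := Real.lt_sqrt_of_sq_lt (by linarith)
  have hτs : 0 < τs := by
    have : 0 < s - 1 := by linarith
    positivity
  have hinv : 1 / τs = 2 * (s - 1) * (s + 2) ^ 2 / 27 := one_div_div _ _
  have hk0 : k0 ^ 2 = 2 / 3 + s / 3 := Real.sq_sqrt (by linarith)
  have hlb : ∀ k : ℝ, 0 ≤ k → -(1 / τs) ≤ g k := fun k _ => hinv ▸ neg_le_pfcRate hs hs1.le k
  have hmin : g k0 = -(1 / τs) := hinv ▸ pfcRate_eq_of_sq_eq hs hk0
  have hg : Continuous g := by fun_prop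
  exact ⟨hlb, hk0, hmin, fun τ hτ =>
    exists_one_add_mul_eq_zero_iff hg (by simp [g]) hτs (Real.sqrt_nonneg _) hmin hlb hτ⟩
end

section
/- Let r < 0 and ψ̄ ∈ ℝ, and define g(k) = (3ψ̄² + 1 + r)k² − 2k⁴ + k⁶ for k ≥ 0. Then there exists τ > 0 and k ≥ 0 with 1 + τ·g(k) = 0 if and only if ψ̄² < −r/3. -/
theorem stmt_6 (r ψ : ℝ) (hr : r < 0) :
    let g : ℝ → ℝ := fun k => (3 * ψ ^ 2 + 1 + r) * k ^ 2 - 2 * k ^ 4 + k ^ 6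
    (∃ τ : ℝ, 0 < τ ∧ ∃ k : ℝ, 0 ≤ k ∧ 1 + τ * g k = 0) ↔ ψ ^ 2 < -r / 3 := by
  intro g
  constructor
  · rintro ⟨τ, hτ, k, hk, h⟩
    have hg : g k < 0 := by
      by_contra hge
      push_neg at hge
      nlinarith [mul_nonneg hτ.le hge]
    simp only [g] at hg
    by_contra hle
    push_neg at hle
    have h3 : 0 ≤ 3 * ψ ^ 2 + r := by linarith
    nlinarith [mul_nonneg (sq_nonneg k) (add_nonneg (sq_nonneg (k ^ 2 - 1)) h3)]
  · intro h
    have h3 : 3 * ψ ^ 2 + r < 0 := by linarith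
    have hpos : 0 < -(3 * ψ ^ 2 + r) := by linarith
    refine ⟨1 / (-(3 * ψ ^ 2 + r)), one_div_pos.mpr hpos, 1, by norm_num, ?_⟩
    have hne : -(3 * ψ ^ 2 + r) ≠ 0 := ne_of_gt hpos
    simp only [g]
    rw [show (3 * ψ ^ 2 + 1 + r) * 1 ^ 2 - 2 * 1 ^ 4 + (1:ℝ) ^ 6 = 3 * ψ ^ 2 + r from by ring,
      one_div, inv_neg, neg_mul, inv_mul_cancel₀ (ne_of_lt h3)]
    ring
end

section
/- Let r < 0 and ψ̄² < −r/3, and set α = 1 − 3r − 9ψ̄² (so α > 1). Then the minimal τ > 0 for which 1 + τ[(3ψ̄² + 1 + r)k² − 2k⁴ + k⁶] = 0 has a solution k ≥ 0 is τ* = 27 / (2(√α − 1)(√α + 2)²), and this minimum of the cubic (in s = k²) s³ − 2s² + (3ψ̄² + 1 + r)s is attained at s = 2/3 + √α/3. -/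
/-!
With `a² = 4 - 3c`, the critical points of `s ↦ s³ - 2s² + cs` are `(2 ± a)/3`, and the cubic
factors as its value at `(2 + a)/3` plus `(s - (2 + a)/3)² (s + 2(a - 1)/3)`. For `a ≥ 1` the
second factor is nonnegative on `s ≥ 0`, so `(2 + a)/3` minimises the cubic there, with value
`-2(a - 1)(a + 2)²/27 < 0`. The equation `1 + τ g = 0` with `τ > 0` needs `g = -1/τ`, which
is attainable exactly when `-1/τ` is at least the minimum; hence the least such `τ` is minus the
reciprocal of the minimum.
-/

open Set

theorem IsMinOn.isLeast_of_one_add_mul_eq_zero {ι : Type*} {g : ι → ℝ} {S : Set ι} {x₀ : ι}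
    (hmin : IsMinOn g S x₀) (hx₀ : x₀ ∈ S) {τ₀ : ℝ} (hτ₀ : 0 < τ₀) (hroot : 1 + τ₀ * g x₀ = 0) :
    IsLeast {τ : ℝ | 0 < τ ∧ ∃ x ∈ S, 1 + τ * g x = 0} τ₀ := by
  refine ⟨⟨hτ₀, x₀, hx₀, hroot⟩, ?_⟩
  rintro τ ⟨hτ, x, hx, hτx⟩
  have hle : τ * g x₀ ≤ τ * g x := mul_le_mul_of_nonneg_left (hmin hx) hτ.le
  nlinarith

section Cubic

variable {a c : ℝ}

theorem cubic_eq_min_add_sq_mul (hc : a ^ 2 = 4 - 3 * c) (s : ℝ) :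
    s ^ 3 - 2 * s ^ 2 + c * s
      = -(2 * (a - 1) * (a + 2) ^ 2) / 27 + (s - (2 + a) / 3) ^ 2 * (s + 2 * (a - 1) / 3) := by
  linear_combination s / 3 * hc

theorem cubic_at_critical (hc : a ^ 2 = 4 - 3 * c) :
    ((2 + a) / 3) ^ 3 - 2 * ((2 + a) / 3) ^ 2 + c * ((2 + a) / 3)
      = -(2 * (a - 1) * (a + 2) ^ 2) / 27 := by
  rw [cubic_eq_min_add_sq_mul hc]
  ring

theorem isMinOn_cubic (hc : a ^ 2 = 4 - 3 * c) (ha : 1 ≤ a) :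
    IsMinOn (fun s : ℝ => s ^ 3 - 2 * s ^ 2 + c * s) (Ici 0) ((2 + a) / 3) := by
  refine isMinOn_iff.2 fun s (hs : 0 ≤ s) => ?_
  have hfactor : 0 ≤ (s - (2 + a) / 3) ^ 2 * (s + 2 * (a - 1) / 3) :=
    mul_nonneg (sq_nonneg _) (by linarith)
  simp only [cubic_eq_min_add_sq_mul hc]
  linarith

end Cubic

theorem stmt_7_general (r ψ : ℝ) (hψ : ψ ^ 2 < -r / 3) :
    let α : ℝ := 1 - 3 * r - 9 * ψ ^ 2
    let τs : ℝ := 27 / (2 * (Real.sqrt α - 1) * (Real.sqrt α + 2) ^ 2)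
    let f : ℝ → ℝ := fun s => s ^ 3 - 2 * s ^ 2 + (3 * ψ ^ 2 + 1 + r) * s
    1 < α ∧
    IsLeast {τ : ℝ | 0 < τ ∧
      ∃ k : ℝ, 0 ≤ k ∧
        1 + τ * ((3 * ψ ^ 2 + 1 + r) * k ^ 2 - 2 * k ^ 4 + k ^ 6) = 0} τs ∧
    (∀ s : ℝ, 0 ≤ s → f (2 / 3 + Real.sqrt α / 3) ≤ f s) := by
  intro α τs f
  have hα : 1 < α := by simp only [α]; linarith
  have ha : 1 < √α := Real.lt_sqrt_of_sq_lt (by simpa using hα)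
  have hc : √α ^ 2 = 4 - 3 * (3 * ψ ^ 2 + 1 + r) := by
    rw [Real.sq_sqrt (by linarith)]; simp only [α]; ring
  have hf : IsMinOn f (Ici 0) ((2 + √α) / 3) := isMinOn_cubic hc ha.le
  have hs₀ : 0 ≤ (2 + √α) / 3 := by linarith
  have hk : IsMinOn (fun k : ℝ => (3 * ψ ^ 2 + 1 + r) * k ^ 2 - 2 * k ^ 4 + k ^ 6) (Ici 0)
      √((2 + √α) / 3) := by
    convert hf.comp_mapsTo (g := fun k : ℝ => k ^ 2) (fun k _ => sq_nonneg k)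
      (Real.sq_sqrt hs₀) using 1
    funext k; simp only [f, Function.comp]; ring
  refine ⟨hα, hk.isLeast_of_one_add_mul_eq_zero (Real.sqrt_nonneg _) ?_ ?_, ?_⟩
  · exact div_pos (by norm_num) (by have := sub_pos.2 ha; positivity)
  · have hval := cubic_at_critical hc
    rw [← Real.sq_sqrt hs₀] at hval
    simp only [τs]
    field_simp [show √α - 1 ≠ 0 by linarith]
    linear_combination 27 * hval
  · intro s hs
    rw [show 2 / 3 + √α / 3 = (2 + √α) / 3 by ring]
    exact hf hs

theorem stmt_7 (r ψ : ℝ) (hr : r < 0) (hψ : ψ ^ 2 < -r / 3) :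
    let α : ℝ := 1 - 3 * r - 9 * ψ ^ 2
    let τs : ℝ := 27 / (2 * (Real.sqrt α - 1) * (Real.sqrt α + 2) ^ 2)
    let f : ℝ → ℝ := fun s => s ^ 3 - 2 * s ^ 2 + (3 * ψ ^ 2 + 1 + r) * s
    1 < α ∧
    IsLeast {τ : ℝ | 0 < τ ∧
      ∃ k : ℝ, 0 ≤ k ∧
        1 + τ * ((3 * ψ ^ 2 + 1 + r) * k ^ 2 - 2 * k ^ 4 + k ^ 6) = 0} τs ∧
    (∀ s : ℝ, 0 ≤ s → f (2 / 3 + Real.sqrt α / 3) ≤ f s) :=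
  stmt_7_general r ψ hψ
end

section
/- The denominator q(k) = τk⁶ + (√τ − 2τ)k⁴ − √τ k² + 1 of the third eigenvalue of Q = A·P⁻¹ vanishes for some k ∈ ℝ if and only if τ ≥ 1; the minimal such τ (the critical value τ^♮ = 1) is attained at |k| = 1, since q(k) = 0 is equivalent to √τ = 1/(2k² − k⁴) whenever 0 < k² < 2, and the maximum of 2k² − k⁴ over k ∈ ℝ equals 1, attained at k² = 1. -/
/-!
With `s = √τ`, the denominator factors as `q = (1 - s (2k² - k⁴)) (1 + s k²)`, and the second factor
is positive. So `q` has a real zero iff `1/s` is a value of `2k² - k⁴`; these values fill `(-∞, 1]`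
(the maximum `1` being attained at `k² = 1`), which gives the threshold `s ≥ 1`, i.e. `τ ≥ 1`.
-/

open Real

lemma two_mul_sq_sub_pow_four_le_one (k : ℝ) : 2 * k ^ 2 - k ^ 4 ≤ 1 := by
  nlinarith [sq_nonneg (k ^ 2 - 1)]

lemma exists_two_mul_sq_sub_pow_four_eq {y : ℝ} (hy₀ : 0 ≤ y) (hy₁ : y ≤ 1) :
    ∃ k, 2 * k ^ 2 - k ^ 4 = y := by
  have hcont : ContinuousOn (fun k : ℝ => 2 * k ^ 2 - k ^ 4) (Set.Icc 0 1) := by fun_prop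
  have hy : y ∈ Set.Icc (2 * 0 ^ 2 - 0 ^ 4 : ℝ) (2 * 1 ^ 2 - 1 ^ 4) := by norm_num [hy₀, hy₁]
  obtain ⟨k, -, hk⟩ := intermediate_value_Icc zero_le_one hcont hy
  exact ⟨k, hk⟩

lemma denominator_eq_mul {τ : ℝ} (hτ : 0 ≤ τ) (k : ℝ) :
    τ * k ^ 6 + (√τ - 2 * τ) * k ^ 4 - √τ * k ^ 2 + 1 =
      (1 - √τ * (2 * k ^ 2 - k ^ 4)) * (1 + √τ * k ^ 2) := by
  linear_combination (2 * k ^ 4 - k ^ 6) * sq_sqrt hτ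

lemma denominator_eq_zero_iff {τ : ℝ} (hτ : 0 < τ) (k : ℝ) :
    τ * k ^ 6 + (√τ - 2 * τ) * k ^ 4 - √τ * k ^ 2 + 1 = 0 ↔ √τ * (2 * k ^ 2 - k ^ 4) = 1 := by
  have hpos : 0 < 1 + √τ * k ^ 2 := by positivity
  rw [denominator_eq_mul hτ.le, mul_eq_zero, or_iff_left hpos.ne', sub_eq_zero, eq_comm]

lemma exists_mul_two_mul_sq_sub_pow_four_eq_one_iff {s : ℝ} (hs : 0 < s) :
    (∃ k, s * (2 * k ^ 2 - k ^ 4) = 1) ↔ 1 ≤ s := by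
  constructor
  · rintro ⟨k, hk⟩
    nlinarith [two_mul_sq_sub_pow_four_le_one k]
  · intro h
    obtain ⟨k, hk⟩ := exists_two_mul_sq_sub_pow_four_eq (one_div_nonneg.2 hs.le)
      ((div_le_one hs).2 h)
    exact ⟨k, by rw [hk, mul_one_div_cancel hs.ne']⟩

theorem stmt_11 :
    let q : ℝ → ℝ → ℝ := fun τ k =>
      τ * k ^ 6 + (Real.sqrt τ - 2 * τ) * k ^ 4 - Real.sqrt τ * k ^ 2 + 1
    (∀ τ : ℝ, 0 < τ → ((∃ k : ℝ, q τ k = 0) ↔ 1 ≤ τ)) ∧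
    (∀ τ k : ℝ, 0 < τ → 0 < k ^ 2 → k ^ 2 < 2 →
      (q τ k = 0 ↔ Real.sqrt τ = 1 / (2 * k ^ 2 - k ^ 4))) ∧
    (∀ k : ℝ, 2 * k ^ 2 - k ^ 4 ≤ 1) ∧
    2 * (1 : ℝ) ^ 2 - (1 : ℝ) ^ 4 = 1 ∧
    q 1 1 = 0 := by
  intro q
  refine ⟨fun τ hτ => ?_, fun τ k hτ hk₀ hk₂ => ?_, two_mul_sq_sub_pow_four_le_one,
    by norm_num, by norm_num [q]⟩
  · simp only [q, denominator_eq_zero_iff hτ]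
    rw [exists_mul_two_mul_sq_sub_pow_four_eq_one_iff (sqrt_pos.2 hτ), one_le_sqrt]
  · have hd : 0 < 2 * k ^ 2 - k ^ 4 := by nlinarith
    simp only [q, denominator_eq_zero_iff hτ]
    rw [eq_div_iff hd.ne']
end

section
/- Let P = [[M, δ⁻¹(M − S)], [τK, δK + S]] be the 2×2 block matrix with δ = √τ. If S = M − 2δK + δ·K M⁻¹ K and M is invertible, then P admits the block factorization P = [[M, 0], [τK, M + δK]] · [[I, M⁻¹(2K − B)], [0, M⁻¹(M − 2δK + δB)]], where B = K M⁻¹ K. -/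
theorem stmt_16 (n : ℕ) (M K : Matrix (Fin n) (Fin n) ℝ) [Invertible M]
    (τ : ℝ) (hτ : 0 < τ) :
    let δ : ℝ := Real.sqrt τ
    let B : Matrix (Fin n) (Fin n) ℝ := K * M⁻¹ * K
    let S : Matrix (Fin n) (Fin n) ℝ := M - (2 * δ) • K + δ • (K * M⁻¹ * K)
    Matrix.fromBlocks M (δ⁻¹ • (M - S)) (τ • K) (δ • K + S) =
      Matrix.fromBlocks M 0 (τ • K) (M + δ • K) *
        Matrix.fromBlocks 1 (M⁻¹ * ((2 : ℝ) • K - B)) 0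
          (M⁻¹ * (M - (2 * δ) • K + δ • B)) := by
  intro δ B S
  have hδpos : 0 < δ := Real.sqrt_pos.mpr hτ
  have hδ : δ ≠ 0 := ne_of_gt hδpos
  have hδ2 : δ * δ = τ := Real.mul_self_sqrt hτ.le
  have hMM : M * M⁻¹ = 1 := Matrix.mul_inv_of_invertible M
  have hMM' : M⁻¹ * M = 1 := Matrix.inv_mul_of_invertible M
  rw [Matrix.fromBlocks_multiply]
  have htr : δ⁻¹ • (M - S) = M * 0 + M * (M⁻¹ * ((2 : ℝ) • K - B)) := by
    rw [← Matrix.mul_assoc, hMM, Matrix.mul_zero, Matrix.one_mul, zero_add]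
    show δ⁻¹ • (M - (M - (2 * δ) • K + δ • B)) = (2 : ℝ) • K - B
    have h1 : M - (M - (2 * δ) • K + δ • B) = (2 * δ) • K - δ • B := by abel
    rw [h1, smul_sub, smul_smul, smul_smul,
      show δ⁻¹ * (2 * δ) = 2 by field_simp,
      inv_mul_cancel₀ hδ, one_smul]
  have hbr : δ • K + S =
      τ • K * (M⁻¹ * ((2 : ℝ) • K - B)) +
        (M + δ • K) * (M⁻¹ * (M - (2 * δ) • K + δ • B)) := by
    show δ • K + (M - (2 * δ) • K + δ • B) = _
    have hKB : K * (M⁻¹ * B) = K * M⁻¹ * B := by rw [Matrix.mul_assoc]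
    simp only [Matrix.smul_mul, Matrix.mul_smul, Matrix.add_mul, Matrix.mul_add,
      Matrix.mul_sub, Matrix.sub_mul, ← Matrix.mul_assoc, hMM', hMM, Matrix.one_mul,
      Matrix.mul_one, smul_add, smul_sub, smul_smul]
    have hB : K * M⁻¹ * K = B := rfl
    rw [hB, ← hδ2]
    module
  rw [htr, hbr]
  simp
end

section
/- Define the symbols 𝒜(k) = [[1, −c+2k², k²],[τk², 1, 0],[0, k², 1]] and 𝒫(k) = [[1, 2k² − k⁴, 0],[τk², 1 − δk² + δk⁴, 0],[0, k², 1]] with δ = √τ and c = 3ψ̄² + 1 + r. If det 𝒫(k) ≠ 0, then the eigenvalues of 𝒬(k) = 𝒜(k)·𝒫(k)⁻¹ are {1, 1, (τ(k⁶ − 2k⁴ + c k²) + 1)/(τk⁶ + (√τ − 2τ)k⁴ − √τ k² + 1)}. -/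
/-!
Since `λ - A P⁻¹ = -(A - λ P) P⁻¹`, the eigenvalues of `A P⁻¹` are the roots of the pencil
determinant `det (A - λ P)`. Expanding along the third column, this determinant equals
`(1 - λ)² (N - λ det P)` with `N = τ (k⁶ - 2k⁴ + c k²) + 1`, so the roots are `1` (twice) and
`N / det P`.
-/

open Matrix

section Spectrum

variable {K : Type*} [Field K] {n : Type*} [Fintype n] [DecidableEq n]

theorem mem_spectrum_mul_inv_iff_det_sub_smul_eq_zero (A P : Matrix n n K) (hP : P.det ≠ 0)
    (lam : K) : lam ∈ spectrum K (A * P⁻¹) ↔ (A - lam • P).det = 0 := by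
  have hPu : IsUnit P.det := isUnit_iff_ne_zero.mpr hP
  have hfactor : algebraMap K (Matrix n n K) lam - A * P⁻¹ = -(A - lam • P) * P⁻¹ := by
    rw [Algebra.algebraMap_eq_smul_one, neg_sub, Matrix.sub_mul, Matrix.smul_mul,
      Matrix.mul_nonsing_inv P hPu]
  rw [spectrum.mem_iff, hfactor, Matrix.isUnit_iff_isUnit_det, Matrix.det_mul,
    Matrix.det_nonsing_inv, Matrix.det_neg, Ring.inverse_eq_inv, isUnit_iff_ne_zero, not_not]
  simp [hP]

theorem spectrum_mul_inv_eq_of_det_sub_smul_eq (A P : Matrix n n K) (hP : P.det ≠ 0) (E : K)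
    (hpencil : ∀ lam : K, (A - lam • P).det = P.det * (1 - lam) ^ 2 * (E - lam)) :
    spectrum K (A * P⁻¹) = {1, E} := by
  ext lam
  rw [mem_spectrum_mul_inv_iff_det_sub_smul_eq_zero A P hP, hpencil]
  simp only [mul_eq_zero, hP, false_or, pow_eq_zero_iff two_ne_zero, sub_eq_zero,
    Set.mem_insert_iff, Set.mem_singleton_iff]
  exact or_congr eq_comm eq_comm

end Spectrum

section FourierSymbol

variable {R : Type*} [CommRing R]

def fourierSymbolA (τ c k : R) : Matrix (Fin 3) (Fin 3) R :=
  !![1, -c + 2 * k ^ 2, k ^ 2; τ * k ^ 2, 1, 0; 0, k ^ 2, 1]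

def fourierSymbolP (τ δ k : R) : Matrix (Fin 3) (Fin 3) R :=
  !![1, 2 * k ^ 2 - k ^ 4, 0; τ * k ^ 2, 1 - δ * k ^ 2 + δ * k ^ 4, 0; 0, k ^ 2, 1]

theorem det_fourierSymbolP (τ δ k : R) :
    (fourierSymbolP τ δ k).det = τ * k ^ 6 + (δ - 2 * τ) * k ^ 4 - δ * k ^ 2 + 1 := by
  simp only [fourierSymbolP, det_fin_three, of_apply, cons_val, cons_val_zero, cons_val_one]
  ring

theorem det_fourierSymbolA_sub_smul_fourierSymbolP (τ c δ k lam : R) :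
    (fourierSymbolA τ c k - lam • fourierSymbolP τ δ k).det =
      (1 - lam) ^ 2 *
        (τ * (k ^ 6 - 2 * k ^ 4 + c * k ^ 2) + 1 - lam * (fourierSymbolP τ δ k).det) := by
  rw [det_fourierSymbolP, det_fin_three]
  simp only [fourierSymbolA, fourierSymbolP, Matrix.sub_apply, Matrix.smul_apply, of_apply,
    cons_val, cons_val_zero, cons_val_one]
  ring

end FourierSymbol

theorem stmt_17_general (τ r ψ k : ℝ) :
    let δ : ℝ := Real.sqrt τ
    let c : ℝ := 3 * ψ ^ 2 + 1 + r
    let A : Matrix (Fin 3) (Fin 3) ℝ :=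
      !![1, -c + 2 * k ^ 2, k ^ 2; τ * k ^ 2, 1, 0; 0, k ^ 2, 1]
    let P : Matrix (Fin 3) (Fin 3) ℝ :=
      !![1, 2 * k ^ 2 - k ^ 4, 0; τ * k ^ 2, 1 - δ * k ^ 2 + δ * k ^ 4, 0; 0, k ^ 2, 1]
    let E : ℝ := (τ * (k ^ 6 - 2 * k ^ 4 + c * k ^ 2) + 1) /
      (τ * k ^ 6 + (Real.sqrt τ - 2 * τ) * k ^ 4 - Real.sqrt τ * k ^ 2 + 1)
    P.det ≠ 0 →
      (∀ lam : ℝ, (A - lam • P).det = P.det * (1 - lam) ^ 2 * (E - lam)) ∧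
      spectrum ℝ (A * P⁻¹) = {1, E} := by
  intro δ c A P E hP
  have hA : A = fourierSymbolA τ c k := rfl
  have hPsymb : P = fourierSymbolP τ δ k := rfl
  have hE : E = (τ * (k ^ 6 - 2 * k ^ 4 + c * k ^ 2) + 1) / P.det := by
    rw [hPsymb, det_fourierSymbolP]
  have hpencil (lam : ℝ) : (A - lam • P).det = P.det * (1 - lam) ^ 2 * (E - lam) := by
    have h := det_fourierSymbolA_sub_smul_fourierSymbolP τ c δ k lam
    rw [← hA, ← hPsymb] at h
    rw [h, hE]
    field_simp
  exact ⟨hpencil, spectrum_mul_inv_eq_of_det_sub_smul_eq A P hP E hpencil⟩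

theorem stmt_17 (τ r ψ k : ℝ) (hτ : 0 < τ) :
    let δ : ℝ := Real.sqrt τ
    let c : ℝ := 3 * ψ ^ 2 + 1 + r
    let A : Matrix (Fin 3) (Fin 3) ℝ :=
      !![1, -c + 2 * k ^ 2, k ^ 2; τ * k ^ 2, 1, 0; 0, k ^ 2, 1]
    let P : Matrix (Fin 3) (Fin 3) ℝ :=
      !![1, 2 * k ^ 2 - k ^ 4, 0; τ * k ^ 2, 1 - δ * k ^ 2 + δ * k ^ 4, 0; 0, k ^ 2, 1]
    let E : ℝ := (τ * (k ^ 6 - 2 * k ^ 4 + c * k ^ 2) + 1) /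
      (τ * k ^ 6 + (Real.sqrt τ - 2 * τ) * k ^ 4 - Real.sqrt τ * k ^ 2 + 1)
    P.det ≠ 0 →
      (∀ lam : ℝ, (A - lam • P).det = P.det * (1 - lam) ^ 2 * (E - lam)) ∧
      spectrum ℝ (A * P⁻¹) = {1, E} :=
  stmt_17_general τ r ψ k
end
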